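/- arXiv:2604.01716 — 4 statements merged into one kernel-verified Lean document; each statement's English description precedes it below -/
import Mathlib

section
/- Let f(t) = ∫₀^{π/2} cos(tx)/√(cos x) dx. Then for every real t > 1, f satisfies the recursive relation f(t) = -((2t-3)/(2t-1)) · f(t-2). -/
open Real MeasureTheory Set intervalIntegral

lemma sqrt_cos_lb {x : ℝ} (hx0 : 0 ≤ x) (hx1 : x ≤ π/2) :
    Real.sqrt (2/π) * Real.sqrt (π/2 - x) ≤ Real.sqrt (Real.cos x) := by
  rw [← Real.sqrt_mul (by positivity)]
  apply Real.sqrt_le_sqrt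
  have := Real.mul_le_sin (x := π/2 - x) (by linarith) (by linarith)
  rw [Real.sin_pi_div_two_sub] at this
  linarith

lemma integrable_aux (s : ℝ) :
    IntervalIntegrable (fun x => Real.cos (s*x) / Real.sqrt (Real.cos x))
      MeasureTheory.volume 0 (π/2) := by
  have hπ := Real.pi_pos
  have hg : IntervalIntegrable
      (fun x => Real.sqrt (π/2) * (π/2 - x) ^ (-(1/2) : ℝ))
      MeasureTheory.volume 0 (π/2) := by
    have h0 := (intervalIntegrable_rpow' (a := 0) (b := π/2)
      (r := (-(1/2) : ℝ)) (by norm_num)).comp_sub_left (π/2)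
    simpa using (h0.const_mul (Real.sqrt (π/2))).symm
  apply hg.mono_fun
  · apply Measurable.aestronglyMeasurable
    exact (Real.continuous_cos.comp (continuous_const.mul continuous_id)).measurable.div
      (Real.continuous_sqrt.comp Real.continuous_cos).measurable
  · rw [Filter.EventuallyLE, MeasureTheory.ae_restrict_iff' measurableSet_uIoc]
    filter_upwards with x hx
    rw [Set.uIoc_of_le (by linarith)] at hx
    obtain ⟨hx0, hx1⟩ := hx
    rcases eq_or_lt_of_le hx1 with rfl | hx1'
    · simp [Real.cos_pi_div_two, div_zero]
    · have hcos : 0 < Real.cos x := Real.cos_pos_of_mem_Ioo ⟨by linarith, hx1'⟩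
      have hs : 0 < Real.sqrt (Real.cos x) := Real.sqrt_pos.2 hcos
      have hu : (0:ℝ) < π/2 - x := by linarith
      have hsu : 0 < Real.sqrt (π/2 - x) := Real.sqrt_pos.2 hu
      have hlb : Real.sqrt (2/π) * Real.sqrt (π/2 - x) ≤ Real.sqrt (Real.cos x) :=
        sqrt_cos_lb hx0.le hx1
      have h1 : ‖Real.cos (s*x) / Real.sqrt (Real.cos x)‖ ≤ 1 / Real.sqrt (Real.cos x) := by
        rw [norm_div, Real.norm_eq_abs, Real.norm_eq_abs, abs_of_nonneg hs.le]
        gcongr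
        exact Real.abs_cos_le_one _
      apply h1.trans
      have h2 : 1 / Real.sqrt (Real.cos x) ≤ 1 / (Real.sqrt (2/π) * Real.sqrt (π/2 - x)) := by
        gcongr
      apply h2.trans
      have e1 : (π/2 - x) ^ (-(1/2) : ℝ) = (Real.sqrt (π/2 - x))⁻¹ := by
        rw [Real.rpow_neg hu.le, Real.sqrt_eq_rpow]
      have e2 : (Real.sqrt (2/π))⁻¹ = Real.sqrt (π/2) := by
        rw [← Real.sqrt_inv]
        congr 1
        field_simp
      rw [Real.norm_eq_abs]
      rw [one_div, mul_inv, e2, ← e1]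
      exact le_abs_self _

lemma key (t : ℝ) :
    ∫ x in (0:ℝ)..(π/2),
        ((2*t-1) * Real.cos (t*x) + (2*t-3) * Real.cos ((t-2)*x))
          / (4 * Real.sqrt (Real.cos x)) = 0 := by
  have hπ := Real.pi_pos
  set g : ℝ → ℝ := fun x => Real.sin ((t-1)*x) * Real.sqrt (Real.cos x) with hg
  set F : ℝ → ℝ := fun x =>
    ((2*t-1) * Real.cos (t*x) + (2*t-3) * Real.cos ((t-2)*x))
      / (4 * Real.sqrt (Real.cos x)) with hF
  have hFsplit : F = fun x =>
      (2*t-1)/4 * (Real.cos (t*x) / Real.sqrt (Real.cos x))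
        + (2*t-3)/4 * (Real.cos ((t-2)*x) / Real.sqrt (Real.cos x)) := by
    funext x
    simp only [hF]
    rw [add_div, div_mul_div_comm, div_mul_div_comm]
  have hint : IntervalIntegrable F MeasureTheory.volume 0 (π/2) := by
    rw [hFsplit]
    exact ((integrable_aux t).const_mul _).add ((integrable_aux (t-2)).const_mul _)
  have hcont : ContinuousOn g (Icc 0 (π/2)) := by
    apply Continuous.continuousOn
    exact (Real.continuous_sin.comp (continuous_const.mul continuous_id)).mul
      (Real.continuous_sqrt.comp Real.continuous_cos)
  have hderiv : ∀ x ∈ Ioo (0:ℝ) (π/2), HasDerivWithinAt g (F x) (Ioi x) x := by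
    intro x hx
    have hcos : 0 < Real.cos x := Real.cos_pos_of_mem_Ioo ⟨by linarith [hx.1], hx.2⟩
    have hs : Real.sqrt (Real.cos x) ≠ 0 := (Real.sqrt_pos.2 hcos).ne'
    have hsq : Real.sqrt (Real.cos x) * Real.sqrt (Real.cos x) = Real.cos x :=
      Real.mul_self_sqrt hcos.le
    have h1 : HasDerivAt (fun x => Real.sin ((t-1)*x))
        (Real.cos ((t-1)*x) * ((t-1)*1)) x :=
      ((hasDerivAt_id x).const_mul (t-1)).sin
    have h2 : HasDerivAt (fun x => Real.sqrt (Real.cos x))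
        (-Real.sin x / (2 * Real.sqrt (Real.cos x))) x :=
      (Real.hasDerivAt_cos x).sqrt hcos.ne'
    have hmul := h1.mul h2
    have heq : Real.cos ((t-1)*x) * ((t-1)*1) * Real.sqrt (Real.cos x)
        + Real.sin ((t-1)*x) * (-Real.sin x / (2 * Real.sqrt (Real.cos x))) = F x := by
      simp only [hF]
      have e1 : t*x = (t-1)*x + x := by ring
      have e2 : (t-2)*x = (t-1)*x - x := by ring
      rw [e1, e2, Real.cos_add, Real.cos_sub]
      field_simp
      linear_combination (Real.cos ((t-1)*x) * (t-1) *
        8) * hsq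
    rw [← heq]
    exact hmul.hasDerivWithinAt
  have := intervalIntegral.integral_eq_sub_of_hasDeriv_right_of_le (by linarith)
    hcont hderiv hint
  rw [this, hg]
  simp [Real.cos_pi_div_two]

/-- For `f t = ∫₀^{π/2} cos(t x)/√(cos x) dx` and `t > 1`,
`f t = -((2t-3)/(2t-1)) · f (t-2)`. -/
theorem stmt0 (t : ℝ) (ht : 1 < t) :
    (∫ x in (0:ℝ)..(π/2), Real.cos (t * x) / Real.sqrt (Real.cos x))
      = -((2*t - 3)/(2*t - 1)) *
        ∫ x in (0:ℝ)..(π/2), Real.cos ((t - 2) * x) / Real.sqrt (Real.cos x) := by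
  have hk := key t
  have hsplit : ∫ x in (0:ℝ)..(π/2),
      ((2*t-1) * Real.cos (t*x) + (2*t-3) * Real.cos ((t-2)*x))
        / (4 * Real.sqrt (Real.cos x))
      = (2*t-1)/4 * (∫ x in (0:ℝ)..(π/2), Real.cos (t*x) / Real.sqrt (Real.cos x))
        + (2*t-3)/4 * (∫ x in (0:ℝ)..(π/2), Real.cos ((t-2)*x) / Real.sqrt (Real.cos x)) := by
    rw [← intervalIntegral.integral_const_mul, ← intervalIntegral.integral_const_mul,
      ← intervalIntegral.integral_add ((integrable_aux t).const_mul _)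
        ((integrable_aux (t-2)).const_mul _)]
    congr 1
    funext x
    rw [add_div, div_mul_div_comm, div_mul_div_comm]
  rw [hsplit] at hk
  have h2t : (2*t - 1) ≠ 0 := by linarith
  field_simp
  rw [neg_div', eq_div_iff (by linarith : (t*2 - 1 : ℝ) ≠ 0)]
  linear_combination 4 * hk
end

section
/- Let f(t) = ∫₀^{π/2} cos(tx)/√(cos x) dx. Then f(t) = 0 if and only if |t| = (4j-1)/2 for some positive integer j. -/
open Real MeasureTheory intervalIntegral Set

noncomputable def FF (t : ℝ) : ℝ := ∫ x in (0:ℝ)..(π/2), Real.cos (t*x) / Real.sqrt (Real.cos x)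

lemma cos_lb {x : ℝ} (h1 : x ∈ Set.Icc 0 (π/2)) : 2/π * (π/2 - x) ≤ Real.cos x := by
  have := Real.mul_le_sin (x := π/2 - x) (by linarith [h1.2]) (by linarith [h1.1])
  simpa [Real.sin_pi_div_two_sub] using this

lemma intInt_inv_sqrt : IntervalIntegrable (fun x => 1 / Real.sqrt (Real.cos x)) volume 0 (π/2) := by
  have hbase : IntervalIntegrable (fun x : ℝ => (x) ^ (-(1:ℝ)/2)) volume 0 (π/2) :=
    intervalIntegral.intervalIntegrable_rpow' (by norm_num)
  have hg : IntervalIntegrable (fun x : ℝ => Real.sqrt (π/2) * (π/2 - x) ^ (-(1:ℝ)/2)) volume 0 (π/2) := by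
    apply IntervalIntegrable.const_mul
    have := hbase.comp_sub_left (π/2)
    simpa using this.symm
  apply hg.mono_fun'
  · exact (measurable_const.div
      ((Real.continuous_sqrt.measurable).comp Real.measurable_cos)).aestronglyMeasurable
  · rw [Filter.EventuallyLE, ae_restrict_iff' measurableSet_uIoc]
    apply Filter.Eventually.of_forall
    intro x hx
    rw [Set.uIoc_of_le (by positivity)] at hx
    have hx0 : 0 < x := hx.1
    have hx2 : x ≤ π/2 := hx.2
    have hcos : 2/π * (π/2 - x) ≤ Real.cos x := cos_lb ⟨le_of_lt hx0, hx2⟩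
    rcases eq_or_lt_of_le hx2 with he | hlt
    · simp [he]
    · have h1 : 0 < π/2 - x := by linarith
      have hpi := Real.pi_pos
      have hc0 : 0 < Real.cos x := lt_of_lt_of_le (by positivity) hcos
      have e1 : ‖1/Real.sqrt (Real.cos x)‖ = Real.sqrt (1/Real.cos x) := by
        rw [Real.norm_eq_abs, abs_of_nonneg (by positivity), one_div, one_div, Real.sqrt_inv]
      have e2 : (π/2 - x) ^ (-(1:ℝ)/2) = (Real.sqrt (π/2 - x))⁻¹ := by
        rw [show (-(1:ℝ)/2) = -(1/2) by ring, Real.rpow_neg h1.le, ← Real.sqrt_eq_rpow]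
      have e3 : Real.sqrt ((π/2)/(π/2-x)) = Real.sqrt (π/2) * (Real.sqrt (π/2-x))⁻¹ := by
        rw [Real.sqrt_div (by positivity : (0:ℝ) ≤ π/2) (π/2-x), div_eq_mul_inv]
      rw [e1, e2, ← e3]
      apply Real.sqrt_le_sqrt
      rw [div_le_div_iff₀ hc0 h1]
      have h := mul_le_mul_of_nonneg_left hcos (by positivity : (0:ℝ) ≤ π/2)
      have e4 : π/2 * (2/π * (π/2 - x)) = π/2 - x := by field_simp
      linarith

lemma intInt_aux {g : ℝ → ℝ} (hg : Measurable g) (hb : ∀ x, |g x| ≤ 1) :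
    IntervalIntegrable (fun x => g x / Real.sqrt (Real.cos x)) volume 0 (π/2) := by
  apply intInt_inv_sqrt.mono_fun'
  · exact (hg.div ((Real.continuous_sqrt.measurable).comp Real.measurable_cos)).aestronglyMeasurable
  · apply Filter.Eventually.of_forall
    intro x
    simp only [Real.norm_eq_abs]
    rcases eq_or_lt_of_le (Real.sqrt_nonneg (Real.cos x)) with he | hpos
    · simp [← he]
    · rw [abs_div, abs_of_pos hpos]
      gcongr
      exact hb x

lemma intInt_main (t : ℝ) :
    IntervalIntegrable (fun x => Real.cos (t*x) / Real.sqrt (Real.cos x)) volume 0 (π/2) :=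
  intInt_aux (Real.measurable_cos.comp (measurable_const.mul measurable_id))
    (fun x => Real.abs_cos_le_one _)

lemma FF_neg (t : ℝ) : FF (-t) = FF t := by
  unfold FF
  congr 1
  ext x
  rw [neg_mul, Real.cos_neg]

lemma FF_pos {t : ℝ} (ht : |t| ≤ 1) : 0 < FF t := by
  apply intervalIntegral_pos_of_pos_on (intInt_main t) _ (by positivity)
  intro x hx
  have hx1 := hx.1; have hx2 := hx.2
  have hcx : 0 < Real.cos x := Real.cos_pos_of_mem_Ioo ⟨by linarith [Real.pi_pos], hx2⟩
  have htx : |t * x| < π/2 := by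
    rw [abs_mul, abs_of_pos hx1]
    calc |t| * x ≤ 1 * x := by
          apply mul_le_mul_of_nonneg_right ht hx1.le
      _ < π/2 := by linarith
  have : 0 < Real.cos (t*x) := Real.cos_pos_of_mem_Ioo (abs_lt.mp htx |> fun h => ⟨h.1, h.2⟩)
  positivity

lemma intInt_sin (s : ℝ) :
    IntervalIntegrable (fun x => Real.sin (s*x) * Real.sin x / 2 / Real.sqrt (Real.cos x)) volume 0 (π/2) := by
  apply intInt_aux
  · exact ((Real.measurable_sin.comp (measurable_const.mul measurable_id)).mul
      Real.measurable_sin).div_const 2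
  · intro x
    rw [abs_div, abs_mul, abs_two]
    have h1 := Real.abs_sin_le_one (s*x)
    have h2 := Real.abs_sin_le_one x
    have h3 := abs_nonneg (Real.sin (s*x))
    have h4 := abs_nonneg (Real.sin x)
    nlinarith

lemma FF_rec (t : ℝ) : (2*t - 1) * FF t = (3 - 2*t) * FF (t-2) := by
  set s := t - 1 with hs
  have hpi := Real.pi_pos
  set g : ℝ → ℝ := fun x => Real.sin (s*x) * Real.sqrt (Real.cos x) with hg
  set g' : ℝ → ℝ := fun x => s * (Real.cos (s*x) * Real.sqrt (Real.cos x))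
      - Real.sin (s*x) * Real.sin x / 2 / Real.sqrt (Real.cos x) with hg'
  have hcont : ContinuousOn g (Icc 0 (π/2)) :=
    ((Real.continuous_sin.comp (continuous_const.mul continuous_id)).mul
      (Real.continuous_sqrt.comp Real.continuous_cos)).continuousOn
  have hderiv : ∀ x ∈ Ioo (0:ℝ) (π/2), HasDerivAt g (g' x) x := by
    intro x hx
    have hcx : 0 < Real.cos x := Real.cos_pos_of_mem_Ioo ⟨by linarith [hx.1], hx.2⟩
    have hsx : (0:ℝ) < Real.sqrt (Real.cos x) := Real.sqrt_pos.mpr hcx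
    have h1 : HasDerivAt (fun x => Real.sin (s*x)) (Real.cos (s*x) * s) x := by
      simpa using ((hasDerivAt_id x).const_mul s).sin
    have h2 : HasDerivAt (fun x => Real.sqrt (Real.cos x))
        (1/(2*Real.sqrt (Real.cos x)) * (-Real.sin x)) x :=
      (Real.hasDerivAt_sqrt (ne_of_gt hcx)).comp x (Real.hasDerivAt_cos x)
    have : HasDerivAt (fun x => Real.sin (s*x) * Real.sqrt (Real.cos x))
        (Real.cos (s*x) * s * Real.sqrt (Real.cos x) + Real.sin (s*x) * (1/(2*Real.sqrt (Real.cos x)) * (-Real.sin x))) x :=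
      h1.mul h2
    convert this using 1
    rw [hg']
    field_simp
    ring
  have hint1 : IntervalIntegrable (fun x => Real.cos (s*x) * Real.sqrt (Real.cos x)) volume 0 (π/2) :=
    ((Real.continuous_cos.comp (continuous_const.mul continuous_id)).mul
      (Real.continuous_sqrt.comp Real.continuous_cos)).intervalIntegrable _ _
  have hint2 := intInt_sin s
  have hint : IntervalIntegrable g' volume 0 (π/2) := (hint1.const_mul s).sub hint2
  have hftc := intervalIntegral.integral_eq_sub_of_hasDerivAt_of_le (by positivity) hcont hderiv hint
  have hg0 : g (π/2) - g 0 = 0 := by simp [hg]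
  rw [hg0] at hftc
  rw [hg'] at hftc
  rw [intervalIntegral.integral_sub (hint1.const_mul s) hint2,
    intervalIntegral.integral_const_mul] at hftc
  have key1 : ∫ x in (0:ℝ)..(π/2), Real.cos (s*x) * Real.sqrt (Real.cos x)
      = (FF (s+1) + FF (s-1))/2 := by
    have e : EqOn (fun x => Real.cos (s*x) * Real.sqrt (Real.cos x))
        (fun x => (Real.cos ((s+1)*x) / Real.sqrt (Real.cos x)
                 + Real.cos ((s-1)*x) / Real.sqrt (Real.cos x))/2) (uIcc 0 (π/2)) := by
      intro x hx
      rw [uIcc_of_le (by positivity)] at hx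
      have hcx : 0 ≤ Real.cos x := Real.cos_nonneg_of_mem_Icc ⟨by linarith [hx.1], hx.2⟩
      simp only
      rcases eq_or_lt_of_le hcx with he | hpos
      · simp [← he]
      · have hsx : Real.sqrt (Real.cos x) ≠ 0 := ne_of_gt (Real.sqrt_pos.mpr hpos)
        have hcc : Real.sqrt (Real.cos x) * Real.sqrt (Real.cos x) = Real.cos x :=
          Real.mul_self_sqrt hcx
        rw [show (s+1)*x = s*x + x by ring, show (s-1)*x = s*x - x by ring,
          Real.cos_add, Real.cos_sub]
        field_simp
        linear_combination (2 * Real.cos (s*x)) * hcc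
    rw [intervalIntegral.integral_congr e, intervalIntegral.integral_div,
      intervalIntegral.integral_add (intInt_main (s+1)) (intInt_main (s-1))]
    rfl
  have key2 : ∫ x in (0:ℝ)..(π/2), Real.sin (s*x) * Real.sin x / 2 / Real.sqrt (Real.cos x)
      = (FF (s-1) - FF (s+1))/4 := by
    have e : EqOn (fun x => Real.sin (s*x) * Real.sin x / 2 / Real.sqrt (Real.cos x))
        (fun x => (Real.cos ((s-1)*x) / Real.sqrt (Real.cos x)
                 - Real.cos ((s+1)*x) / Real.sqrt (Real.cos x))/4) (uIcc 0 (π/2)) := by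
      intro x hx
      simp only
      rw [show (s+1)*x = s*x + x by ring, show (s-1)*x = s*x - x by ring,
        Real.cos_add, Real.cos_sub]
      rcases eq_or_ne (Real.sqrt (Real.cos x)) 0 with he | hsx
      · simp [he]
      · field_simp
        ring
    rw [intervalIntegral.integral_congr e, intervalIntegral.integral_div,
      intervalIntegral.integral_sub (intInt_main (s-1)) (intInt_main (s+1))]
    rfl
  rw [key1, key2] at hftc
  have e1 : s + 1 = t := by rw [hs]; ring
  have e2 : s - 1 = t - 2 := by rw [hs]; ring
  rw [e1, e2] at hftc
  have : s = t - 1 := hs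
  nlinarith [hftc]

lemma FF_zero (j : ℕ) : FF ((4*((j:ℝ)+1)-1)/2) = 0 := by
  induction j with
  | zero =>
    have h := FF_rec (3/2)
    norm_num at h ⊢
    linarith
  | succ n ih =>
    have h := FF_rec ((4*((n:ℝ)+2)-1)/2)
    have e2 : (4*((n:ℝ)+2)-1)/2 - 2 = (4*((n:ℝ)+1)-1)/2 := by ring
    rw [e2, ih, mul_zero] at h
    have hne : (2*((4*((n:ℝ)+2)-1)/2) - 1) ≠ 0 := by
      have : (0:ℝ) ≤ n := Nat.cast_nonneg n
      intro hc; nlinarith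
    have hF : FF ((4*((n:ℝ)+2)-1)/2) = 0 := by
      rcases mul_eq_zero.mp h with h'|h'
      · exact absurd h' hne
      · exact h'
    convert hF using 2
    push_cast; ring

lemma FF_forward : ∀ k : ℕ, ∀ t : ℝ, 0 ≤ t → t ≤ k → FF t = 0 →
    ∃ j : ℕ, 0 < j ∧ t = (4*(j:ℝ)-1)/2 := by
  intro k
  induction k with
  | zero =>
    intro t h0 h1 hF
    exfalso
    have ht : |t| ≤ 1 := by rw [abs_of_nonneg h0]; exact_mod_cast h1.trans (by norm_num)
    linarith [FF_pos ht]
  | succ n ih =>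
    intro t h0 h1 hF
    by_cases hle : t ≤ 1
    · exfalso
      have := FF_pos (t := t) (by rw [abs_of_nonneg h0]; exact hle)
      linarith
    · push_neg at hle
      have h := FF_rec t
      rw [hF, mul_zero] at h
      by_cases h32 : t = 3/2
      · exact ⟨1, one_pos, by rw [h32]; norm_num⟩
      · have hFt2 : FF (t-2) = 0 := by
          have hne : (3 - 2*t) ≠ 0 := by intro hc; apply h32; linarith
          rcases mul_eq_zero.mp h.symm with h'|h'
          · exact absurd h' hne
          · exact h'
        by_cases h3 : t ≤ 3
        · exfalso
          have habs : |t-2| ≤ 1 := abs_le.mpr ⟨by linarith, by linarith⟩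
          linarith [FF_pos habs]
        · push_neg at h3
          have h2 : 0 ≤ t - 2 := by linarith
          have h2' : t - 2 ≤ n := by
            push_cast at h1
            linarith
          obtain ⟨j, hj, hjeq⟩ := ih (t-2) h2 h2' hFt2
          refine ⟨j+1, by positivity, ?_⟩
          push_cast
          linarith

/-- For `f t = ∫₀^{π/2} cos(t x)/√(cos x) dx`, `f t = 0` iff `|t| = (4j-1)/2` for
some positive integer `j`. -/
theorem stmt2 (t : ℝ) :
    (∫ x in (0:ℝ)..(π/2), Real.cos (t * x) / Real.sqrt (Real.cos x)) = 0 ↔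
      ∃ j : ℕ, 0 < j ∧ |t| = (4 * (j:ℝ) - 1) / 2 := by
  show FF t = 0 ↔ _
  have habs : FF |t| = FF t := by
    rcases abs_cases t with ⟨h,_⟩|⟨h,_⟩
    · rw [h]
    · rw [h, FF_neg]
  constructor
  · intro h
    obtain ⟨j, hj, he⟩ := FF_forward ⌈|t|⌉₊ |t| (abs_nonneg t) (Nat.le_ceil _)
      (by rw [habs]; exact h)
    exact ⟨j, hj, he⟩
  · rintro ⟨j, hj, he⟩
    rw [← habs, he]
    obtain ⟨m, rfl⟩ : ∃ m, j = m + 1 := ⟨j-1, (Nat.succ_pred_eq_of_pos hj).symm⟩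
    have := FF_zero m
    convert this using 2
    push_cast; ring
end

section
/- Suppose γ : S¹ → ℝ² is a smooth closed curve (arclength parametrized, non-constant curvature k) satisfying both k_ss = Λ₀ h and k_ss + k³ = Λ₁ h for constants Λ₀ ≠ Λ₁, where h = ⟨γ, N⟩. Then there exist constants A ≠ 0 and μ ∈ ℝ such that h = A k³ and k_ss = μ k³, and necessarily μ = -2/9. -/
open Real

/-- Rotation by `π/2` in the plane. -/
def rot90 (p : ℝ × ℝ) : ℝ × ℝ := (-p.2, p.1)

/-- Euclidean dot product in the plane. -/
def dot2 (p q : ℝ × ℝ) : ℝ := p.1 * q.1 + p.2 * q.2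

private lemma hasDerivAt_fst' {f : ℝ → ℝ × ℝ} {f' : ℝ × ℝ} {x : ℝ}
    (h : HasDerivAt f f' x) : HasDerivAt (fun t => (f t).1) f'.1 x :=
  by have := (hasFDerivAt_fst (𝕜 := ℝ) (p := f x)).comp_hasDerivAt x h; exact this

private lemma hasDerivAt_snd' {f : ℝ → ℝ × ℝ} {f' : ℝ × ℝ} {x : ℝ}
    (h : HasDerivAt f f' x) : HasDerivAt (fun t => (f t).2) f'.2 x :=
  by have := (hasFDerivAt_snd (𝕜 := ℝ) (p := f x)).comp_hasDerivAt x h; exact this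

/-- If a closed arclength-parametrised plane curve with non-constant curvature `k`
satisfies both `k_ss = Λ₀ h` and `k_ss + k³ = Λ₁ h` with `Λ₀ ≠ Λ₁`, where
`h = ⟨γ, N⟩`, then `h = A k³` and `k_ss = μ k³` for some `A ≠ 0`, and
necessarily `μ = -2/9`. -/
theorem stmt18 (L : ℝ) (hL : 0 < L) (γ : ℝ → ℝ × ℝ)
    (hγ : ContDiff ℝ (⊤ : ℕ∞) γ) (hper : Function.Periodic γ L)
    (hunit : ∀ s : ℝ, ‖deriv γ s‖ = 1)
    (k : ℝ → ℝ) (hk : ContDiff ℝ (⊤ : ℕ∞) k)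
    (hfrenet : ∀ s : ℝ, deriv (deriv γ) s = k s • rot90 (deriv γ s))
    (hknc : ∃ s₁ s₂ : ℝ, k s₁ ≠ k s₂)
    (Λ₀ Λ₁ : ℝ) (hΛ : Λ₀ ≠ Λ₁)
    (h0 : ∀ s : ℝ, deriv (deriv k) s = Λ₀ * dot2 (γ s) (rot90 (deriv γ s)))
    (h1 : ∀ s : ℝ,
      deriv (deriv k) s + k s ^ 3 = Λ₁ * dot2 (γ s) (rot90 (deriv γ s))) :
    ∃ A μ : ℝ, A ≠ 0 ∧
      (∀ s : ℝ, dot2 (γ s) (rot90 (deriv γ s)) = A * k s ^ 3) ∧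
      (∀ s : ℝ, deriv (deriv k) s = μ * k s ^ 3) ∧
      μ = -2/9 := by
  classical
  set D := deriv γ with hDdef
  -- basic smoothness
  have hgI : ContDiff ℝ ((⊤ : ℕ∞) : WithTop ℕ∞) γ := hγ.of_le (mod_cast le_top)
  have hkI : ContDiff ℝ ((⊤ : ℕ∞) : WithTop ℕ∞) k := hk.of_le (mod_cast le_top)
  have hγd : Differentiable ℝ γ := (contDiff_infty_iff_deriv.mp hgI).1
  have hDsmooth : ContDiff ℝ ((⊤ : ℕ∞) : WithTop ℕ∞) D := (contDiff_infty_iff_deriv.mp hgI).2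
  have hDd : Differentiable ℝ D := (contDiff_infty_iff_deriv.mp hDsmooth).1
  have hkd : Differentiable ℝ k := (contDiff_infty_iff_deriv.mp hkI).1
  have hkds : ContDiff ℝ ((⊤ : ℕ∞) : WithTop ℕ∞) (deriv k) := (contDiff_infty_iff_deriv.mp hkI).2
  have hγ' : ∀ s, HasDerivAt γ (D s) s := fun s => (hγd s).hasDerivAt
  have hD' : ∀ s, HasDerivAt D (k s • rot90 (D s)) s := fun s => by
    have := (hDd s).hasDerivAt
    rwa [show deriv D s = k s • rot90 (D s) from hfrenet s] at this
  -- component derivatives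
  have hγ1 : ∀ s, HasDerivAt (fun t => (γ t).1) ((D s).1) s := fun s => hasDerivAt_fst' (hγ' s)
  have hγ2 : ∀ s, HasDerivAt (fun t => (γ t).2) ((D s).2) s := fun s => hasDerivAt_snd' (hγ' s)
  have hD1 : ∀ s, HasDerivAt (fun t => (D t).1) (k s * (-(D s).2)) s := fun s => by
    have := hasDerivAt_fst' (hD' s)
    simpa [rot90, smul_eq_mul] using this
  have hD2 : ∀ s, HasDerivAt (fun t => (D t).2) (k s * (D s).1) s := fun s => by
    have := hasDerivAt_snd' (hD' s)
    simpa [rot90, smul_eq_mul] using this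
  -- the constants
  have hd : Λ₁ - Λ₀ ≠ 0 := sub_ne_zero.mpr (Ne.symm hΛ)
  set A : ℝ := (Λ₁ - Λ₀)⁻¹ with hAdef
  have hA : A ≠ 0 := inv_ne_zero hd
  have hhA : ∀ s, dot2 (γ s) (rot90 (D s)) = A * k s ^ 3 := fun s => by
    have e1 := h0 s
    have e2 := h1 s
    have : k s ^ 3 = (Λ₁ - Λ₀) * dot2 (γ s) (rot90 (D s)) := by linarith
    rw [hAdef]
    field_simp
    linarith
  set μ : ℝ := Λ₀ * A with hμdef
  have hkdd : ∀ s, deriv (deriv k) s = μ * k s ^ 3 := fun s => by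
    rw [h0 s, hhA s]; ring
  have hk' : ∀ s, HasDerivAt k (deriv k s) s := fun s => (hkd s).hasDerivAt
  have hkdd' : ∀ s, HasDerivAt (deriv k) (μ * k s ^ 3) s := fun s => by
    have := ((contDiff_infty_iff_deriv.mp hkds).1 s).hasDerivAt
    rwa [hkdd s] at this
  -- derivative of h = ⟨γ, N⟩
  have hh' : ∀ s, HasDerivAt (fun t => dot2 (γ t) (rot90 (D t)))
      (-(k s * dot2 (γ s) (D s))) s := fun s => by
    have H := ((hγ1 s).mul ((hD2 s).neg)).add ((hγ2 s).mul (hD1 s))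
    have e : (fun t => dot2 (γ t) (rot90 (D t))) =
        fun t => (γ t).1 * -(D t).2 + (γ t).2 * (D t).1 := by
      funext t; simp [dot2, rot90]
    rw [e]
    exact H.congr_deriv (by simp only [dot2, Pi.neg_apply]; ring)
  -- derivative of q = ⟨γ, T⟩
  have hq' : ∀ s, HasDerivAt (fun t => dot2 (γ t) (D t))
      (dot2 (D s) (D s) + k s * dot2 (γ s) (rot90 (D s))) s := fun s => by
    have H := ((hγ1 s).mul (hD1 s)).add ((hγ2 s).mul (hD2 s))
    have e : (fun t => dot2 (γ t) (D t)) =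
        fun t => (γ t).1 * (D t).1 + (γ t).2 * (D t).2 := by
      funext t; simp [dot2]
    rw [e]
    exact H.congr_deriv (by simp only [dot2, rot90]; ring)
  -- pointwise: -(k q) = A(k³)'
  have hq3 : ∀ s, -(k s * dot2 (γ s) (D s)) = A * ((3 : ℝ) * k s ^ 2 * deriv k s) := fun s => by
    have e : (fun t => dot2 (γ t) (rot90 (D t))) = fun t => A * k t ^ 3 := funext hhA
    have H1 := hh' s
    rw [e] at H1
    have H2 : HasDerivAt (fun t => A * k t ^ 3) (A * ((3 : ℕ) * k s ^ (3 - 1) * deriv k s)) s :=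
      ((hk' s).pow 3).const_mul A
    have := H1.unique H2
    simpa using this
  -- on the open set {k ≠ 0}, q = -3A k k'
  have hqU : ∀ t, k t ≠ 0 → dot2 (γ t) (D t) = -(3 * A) * (k t * deriv k t) := fun t ht => by
    have h3 := hq3 t
    apply mul_left_cancel₀ ht
    linear_combination -h3
  have hUopen : IsOpen {s : ℝ | k s ≠ 0} := by
    have : {s : ℝ | k s ≠ 0} = k ⁻¹' ({0}ᶜ) := rfl
    rw [this]
    exact (isOpen_compl_singleton).preimage hk.continuous
  -- on {k ≠ 0}: E + A k⁴ + 3A k'² + 3Aμ k⁴ = 0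
  have key : ∀ s, k s ≠ 0 →
      dot2 (D s) (D s) + A * k s ^ 4 + 3 * A * (deriv k s) ^ 2 + 3 * A * μ * k s ^ 4 = 0 := by
    intro s hs
    have hmem : {t : ℝ | k t ≠ 0} ∈ nhds s := hUopen.mem_nhds hs
    have heq : (fun t => dot2 (γ t) (D t)) =ᶠ[nhds s]
        (fun t => -(3 * A) * (k t * deriv k t)) :=
      Filter.eventuallyEq_of_mem hmem (fun t ht => hqU t ht)
    have d1 : deriv (fun t => dot2 (γ t) (D t)) s =
        dot2 (D s) (D s) + k s * dot2 (γ s) (rot90 (D s)) := (hq' s).deriv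
    have d2 : deriv (fun t => -(3 * A) * (k t * deriv k t)) s =
        -(3 * A) * (deriv k s * deriv k s + k s * (μ * k s ^ 3)) :=
      (((hk' s).mul (hkdd' s)).const_mul (-(3 * A))).deriv
    have hde := heq.deriv_eq
    rw [d1, d2, hhA s] at hde
    linear_combination hde
  -- a point where both k and k' are nonzero
  have hex : ∃ s, k s ≠ 0 ∧ deriv k s ≠ 0 := by
    obtain ⟨s₁, s₂, hne⟩ := hknc
    have hd0 : ∃ s₀, deriv k s₀ ≠ 0 := by
      by_contra hc
      push_neg at hc
      exact hne (is_const_of_deriv_eq_zero hkd hc s₁ s₂)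
    obtain ⟨s₀, hs₀⟩ := hd0
    by_cases hk0 : k s₀ = 0
    · have h1' : ∀ᶠ z in nhdsWithin s₀ {s₀}ᶜ, k z ≠ k s₀ := (hk' s₀).eventually_ne hs₀
      have h2' : ∀ᶠ z in nhds s₀, deriv k z ≠ 0 :=
        (hkds.continuous.continuousAt (x := s₀)).eventually_ne hs₀
      have h3' := h1'.and (h2'.filter_mono nhdsWithin_le_nhds)
      obtain ⟨z, hz1, hz2⟩ := h3'.exists
      exact ⟨z, by rwa [hk0] at hz1, hz2⟩
    · exact ⟨s₀, hk0, hs₀⟩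
  obtain ⟨s₀, hks, hkds0⟩ := hex
  -- differentiate the identity at s₀
  have hΦ0 : (fun t => dot2 (D t) (D t) + A * k t ^ 4 + 3 * A * (deriv k t) ^ 2
      + 3 * A * μ * k t ^ 4) =ᶠ[nhds s₀] (fun _ => (0 : ℝ)) :=
    Filter.eventuallyEq_of_mem (hUopen.mem_nhds hks) (fun t ht => key t ht)
  -- derivative of E = ⟨T,T⟩ is zero
  have hE' : HasDerivAt (fun t => dot2 (D t) (D t)) 0 s₀ := by
    have H := ((hD1 s₀).mul (hD1 s₀)).add ((hD2 s₀).mul (hD2 s₀))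
    have e : (fun t => dot2 (D t) (D t)) =
        fun t => (D t).1 * (D t).1 + (D t).2 * (D t).2 := by
      funext t; simp [dot2]
    rw [e]
    exact H.congr_deriv (by ring)
  have HΦ : HasDerivAt (fun t => dot2 (D t) (D t) + A * k t ^ 4 + 3 * A * (deriv k t) ^ 2
      + 3 * A * μ * k t ^ 4)
      (0 + A * ((4 : ℕ) * k s₀ ^ (4 - 1) * deriv k s₀)
        + 3 * A * ((2 : ℕ) * deriv k s₀ ^ (2 - 1) * (μ * k s₀ ^ 3))
        + 3 * A * μ * ((4 : ℕ) * k s₀ ^ (4 - 1) * deriv k s₀)) s₀ :=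
    ((hE'.add (((hk' s₀).pow 4).const_mul A)).add
        (((hkdd' s₀).pow 2).const_mul (3 * A))).add
      (((hk' s₀).pow 4).const_mul (3 * A * μ))
  have hEq : (0 : ℝ) + A * ((4 : ℕ) * k s₀ ^ (4 - 1) * deriv k s₀)
      + 3 * A * ((2 : ℕ) * deriv k s₀ ^ (2 - 1) * (μ * k s₀ ^ 3))
      + 3 * A * μ * ((4 : ℕ) * k s₀ ^ (4 - 1) * deriv k s₀) = 0 := by
    rw [← HΦ.deriv, hΦ0.deriv_eq]
    simp
  have hne : A * (k s₀ ^ 3 * deriv k s₀) ≠ 0 :=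
    mul_ne_zero hA (mul_ne_zero (pow_ne_zero _ hks) hkds0)
  have hfin : A * (k s₀ ^ 3 * deriv k s₀) * (4 + 18 * μ) = 0 := by
    push_cast at hEq
    linear_combination hEq
  have h18 : (4 : ℝ) + 18 * μ = 0 := by
    rcases mul_eq_zero.mp hfin with h | h
    · exact absurd h hne
    · exact h
  exact ⟨A, μ, hA, hhA, hkdd, by linarith⟩
end

section
/- Let ω ≥ 1 be an integer, k : ℝ/(2πω ℤ) → ℝ smooth with ∫₀^{2πω} k ds = 2πω, and f := k - 1 with e := ∫ f² ds ≤ 1. Then ∫ f_s² ds ≤ e^{1/2} (∫ f_{ss}² ds)^{1/2}, and there exists a constant C = C(ω) such that |∫ f² f_{ss} ds| ≤ C √e (∫ f_{ss}² ds + e). -/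
open Real

set_option maxHeartbeats 1000000

/-- Cauchy–Schwarz for interval integrals of continuous functions. -/
lemma aux_cs19 {L : ℝ} (hL : 0 ≤ L) {f g : ℝ → ℝ} (hf : Continuous f) (hg : Continuous g) :
    (∫ s in (0:ℝ)..L, |f s| * |g s|) ≤
      Real.sqrt (∫ s in (0:ℝ)..L, f s ^ 2) * Real.sqrt (∫ s in (0:ℝ)..L, g s ^ 2) := by
  set P := ∫ s in (0:ℝ)..L, f s ^ 2 with hPdef
  set Q := ∫ s in (0:ℝ)..L, g s ^ 2 with hQdef
  set I := ∫ s in (0:ℝ)..L, |f s| * |g s| with hIdef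
  have hPint : IntervalIntegrable (fun s => f s ^ 2) MeasureTheory.volume 0 L :=
    (hf.pow 2).intervalIntegrable 0 L
  have hQint : IntervalIntegrable (fun s => g s ^ 2) MeasureTheory.volume 0 L :=
    (hg.pow 2).intervalIntegrable 0 L
  have hIint : IntervalIntegrable (fun s => |f s| * |g s|) MeasureTheory.volume 0 L :=
    (hf.abs.mul hg.abs).intervalIntegrable 0 L
  have key : ∀ t : ℝ, 0 ≤ P * (t * t) + (-2 * I) * t + Q := by
    intro t
    have h0 : (0:ℝ) ≤ ∫ s in (0:ℝ)..L, (t * |f s| - |g s|) ^ 2 :=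
      intervalIntegral.integral_nonneg hL (fun s _ => sq_nonneg _)
    have hexp : (∫ s in (0:ℝ)..L, (t * |f s| - |g s|) ^ 2)
        = t ^ 2 * P + ((-2 * t) * I + Q) := by
      have hcongr : (∫ s in (0:ℝ)..L, (t * |f s| - |g s|) ^ 2)
          = ∫ s in (0:ℝ)..L,
              (t ^ 2 * (f s ^ 2) + ((-2 * t) * (|f s| * |g s|) + g s ^ 2)) := by
        apply intervalIntegral.integral_congr
        intro s _
        have h1 : |f s| ^ 2 = f s ^ 2 := sq_abs _
        have h2 : |g s| ^ 2 = g s ^ 2 := sq_abs _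
        simp only []
        nlinarith [h1, h2]
      rw [hcongr,
        intervalIntegral.integral_add (f := fun s => t ^ 2 * f s ^ 2)
          (g := fun s => (-2 * t) * (|f s| * |g s|) + g s ^ 2) (((continuous_const.mul (hf.pow 2)).intervalIntegrable 0 L :
            IntervalIntegrable (fun s => t ^ 2 * f s ^ 2) MeasureTheory.volume 0 L))
          ((((continuous_const.mul (hf.abs.mul hg.abs)).intervalIntegrable 0 L).add hQint :
            IntervalIntegrable (fun s => (-2 * t) * (|f s| * |g s|) + g s ^ 2) MeasureTheory.volume 0 L)),
        intervalIntegral.integral_add (f := fun s => (-2 * t) * (|f s| * |g s|))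
          (g := fun s => g s ^ 2)
          (((continuous_const.mul (hf.abs.mul hg.abs)).intervalIntegrable 0 L :
            IntervalIntegrable (fun s => (-2 * t) * (|f s| * |g s|)) MeasureTheory.volume 0 L)) hQint,
        intervalIntegral.integral_const_mul, intervalIntegral.integral_const_mul]
    nlinarith [h0, hexp]
  have hdisc : discrim P (-2 * I) Q ≤ 0 := discrim_le_zero key
  rw [discrim] at hdisc
  have hInn : 0 ≤ I :=
    intervalIntegral.integral_nonneg hL (fun s _ => mul_nonneg (abs_nonneg _) (abs_nonneg _))
  have hPnn : 0 ≤ P := intervalIntegral.integral_nonneg hL (fun s _ => sq_nonneg _)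
  have hI2 : I ^ 2 ≤ P * Q := by nlinarith [hdisc]
  calc I = Real.sqrt (I ^ 2) := (Real.sqrt_sq hInn).symm
    _ ≤ Real.sqrt (P * Q) := Real.sqrt_le_sqrt hI2
    _ = Real.sqrt P * Real.sqrt Q := Real.sqrt_mul hPnn Q

lemma aux_alg19 (u v : ℝ) :
    (u ^ 2 + u * v) * (u ^ 2 * v ^ 2) ≤ 3 * u ^ 2 * (v ^ 4 + u ^ 4) := by
  have h1 : 0 ≤ u ^ 2 * (u ^ 2 - v ^ 2) ^ 2 := mul_nonneg (sq_nonneg _) (sq_nonneg _)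
  have h2 : 0 ≤ u ^ 2 * v ^ 2 * (u - v) ^ 2 :=
    mul_nonneg (mul_nonneg (sq_nonneg _) (sq_nonneg _)) (sq_nonneg _)
  nlinarith [h1, h2, sq_nonneg (u ^ 3), sq_nonneg (u * v ^ 2)]

/-- For mean-curvature-normalised `k` (`∫₀^{2πω} k = 2πω`) on the circle of
circumference `2πω`, writing `f = k - 1` and `e = ∫ f² ≤ 1`, one has
`∫ f_s² ≤ √e √(∫ f_ss²)`, and there is `C = C(ω)` with
`|∫ f² f_ss| ≤ C √e (∫ f_ss² + e)`. -/
theorem stmt19 (ω : ℕ) (hω : 1 ≤ ω) :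
    ∃ C : ℝ, 0 < C ∧
      ∀ k : ℝ → ℝ, ContDiff ℝ (⊤ : ℕ∞) k → Function.Periodic k (2 * π * ω) →
        (∫ s in (0:ℝ)..(2 * π * ω), k s) = 2 * π * ω →
        (∫ s in (0:ℝ)..(2 * π * ω), (k s - 1) ^ 2) ≤ 1 →
        (∫ s in (0:ℝ)..(2 * π * ω), (deriv k s) ^ 2)
            ≤ Real.sqrt (∫ s in (0:ℝ)..(2 * π * ω), (k s - 1) ^ 2) *
              Real.sqrt (∫ s in (0:ℝ)..(2 * π * ω), (iteratedDeriv 2 k s) ^ 2) ∧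
        |∫ s in (0:ℝ)..(2 * π * ω), (k s - 1) ^ 2 * iteratedDeriv 2 k s|
            ≤ C * Real.sqrt (∫ s in (0:ℝ)..(2 * π * ω), (k s - 1) ^ 2) *
              ((∫ s in (0:ℝ)..(2 * π * ω), (iteratedDeriv 2 k s) ^ 2)
                + ∫ s in (0:ℝ)..(2 * π * ω), (k s - 1) ^ 2) := by
  refine ⟨3, by norm_num, ?_⟩
  intro k hk hper hmean hone
  set L : ℝ := 2 * π * ω with hLdef
  have hωR : (1:ℝ) ≤ (ω : ℝ) := by exact_mod_cast hω
  have hL1 : (1:ℝ) ≤ L := by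
    have hπ : (3:ℝ) < π := Real.pi_gt_three
    have h6 : (6:ℝ) ≤ 2 * π := by linarith
    have h2 : (1:ℝ) ≤ 6 * 1 := by norm_num
    have h3 : (6:ℝ) * 1 ≤ 2 * π * ω :=
      mul_le_mul h6 hωR zero_le_one (by linarith)
    rw [hLdef]
    linarith
  have hL : (0:ℝ) ≤ L := le_trans zero_le_one hL1
  -- basic regularity
  have hkc : Continuous k := hk.continuous
  have hki : ContDiff ℝ ((⊤ : ℕ∞) : WithTop ℕ∞) k := hk.of_le (by simp)
  have hdk : Differentiable ℝ k := hki.differentiable (by simp)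
  have hk' : ContDiff ℝ ((⊤ : ℕ∞) : WithTop ℕ∞) (deriv k) := (contDiff_infty_iff_deriv.mp hki).2
  have hdk' : Differentiable ℝ (deriv k) := hk'.differentiable (by simp)
  have hk'c : Continuous (deriv k) := hk'.continuous
  have hk''c : Continuous (deriv (deriv k)) := ((contDiff_infty_iff_deriv.mp hk').2).continuous
  have hi2 : iteratedDeriv 2 k = deriv (deriv k) := by
    rw [iteratedDeriv_succ, iteratedDeriv_one]
  set f : ℝ → ℝ := fun s => k s - 1 with hfdef
  have hfc : Continuous f := hkc.sub continuous_const
  -- abbreviations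
  set e := ∫ s in (0:ℝ)..L, f s ^ 2 with hedef
  set X := ∫ s in (0:ℝ)..L, (deriv (deriv k) s) ^ 2 with hXdef
  set P := ∫ s in (0:ℝ)..L, (deriv k s) ^ 2 with hPdef
  have he0 : 0 ≤ e := intervalIntegral.integral_nonneg hL (fun s _ => sq_nonneg _)
  have hX0 : 0 ≤ X := intervalIntegral.integral_nonneg hL (fun s _ => sq_nonneg _)
  have hP0 : 0 ≤ P := intervalIntegral.integral_nonneg hL (fun s _ => sq_nonneg _)
  set A := Real.sqrt e with hAdef
  set B := Real.sqrt X with hBdef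
  have hA0 : 0 ≤ A := Real.sqrt_nonneg _
  have hB0 : 0 ≤ B := Real.sqrt_nonneg _
  have hA2 : A ^ 2 = e := Real.sq_sqrt he0
  have hB2 : B ^ 2 = X := Real.sq_sqrt hX0
  -- periodicity of k and deriv k at the endpoints
  have hkL : k L = k 0 := by simpa using hper 0
  have hk'per : deriv k L = deriv k 0 := by
    have hfun : (fun x => k (x + L)) = k := funext fun x => hper x
    calc deriv k L = deriv k (0 + L) := by rw [zero_add]
      _ = deriv (fun x => k (x + L)) 0 := (deriv_comp_add_const k L 0).symm
      _ = deriv k 0 := by rw [hfun]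
  -- integration by parts: ∫ f·f'' = -∫ (k')²
  have hibp : (∫ s in (0:ℝ)..L, f s * deriv (deriv k) s)
      = f L * deriv k L - f 0 * deriv k 0 - ∫ s in (0:ℝ)..L, deriv k s * deriv k s := by
    apply intervalIntegral.integral_mul_deriv_eq_deriv_mul
    · intro x _
      exact ((hdk x).hasDerivAt).sub_const 1
    · intro x _
      exact (hdk' x).hasDerivAt
    · exact hk'c.intervalIntegrable 0 L
    · exact hk''c.intervalIntegrable 0 L
  have hbd : f L * deriv k L - f 0 * deriv k 0 = 0 := by
    simp only [hfdef, hkL, hk'per]; ring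
  have hsq : (∫ s in (0:ℝ)..L, deriv k s * deriv k s) = P := by
    rw [hPdef]
    apply intervalIntegral.integral_congr
    intro s _; ring
  have hff'' : (∫ s in (0:ℝ)..L, f s * deriv (deriv k) s) = -P := by
    rw [hibp, hbd, hsq]; ring
  -- Cauchy–Schwarz for f, f''
  have hcs2 : (∫ s in (0:ℝ)..L, |f s| * |deriv (deriv k) s|) ≤ A * B :=
    aux_cs19 hL hfc hk''c
  -- Part 1 : P ≤ A * B
  have hpart1 : P ≤ A * B := by
    have h1 : P = -(∫ s in (0:ℝ)..L, f s * deriv (deriv k) s) := by rw [hff'']; ring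
    have h2 : -(∫ s in (0:ℝ)..L, f s * deriv (deriv k) s)
        ≤ |∫ s in (0:ℝ)..L, f s * deriv (deriv k) s| := neg_le_abs _
    have h3 : |∫ s in (0:ℝ)..L, f s * deriv (deriv k) s|
        ≤ ∫ s in (0:ℝ)..L, |f s * deriv (deriv k) s| :=
      intervalIntegral.abs_integral_le_integral_abs hL
    have h4 : (∫ s in (0:ℝ)..L, |f s * deriv (deriv k) s|)
        = ∫ s in (0:ℝ)..L, |f s| * |deriv (deriv k) s| := by
      apply intervalIntegral.integral_congr
      intro s _; exact abs_mul _ _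
    calc P = -(∫ s in (0:ℝ)..L, f s * deriv (deriv k) s) := h1
      _ ≤ |∫ s in (0:ℝ)..L, f s * deriv (deriv k) s| := h2
      _ ≤ ∫ s in (0:ℝ)..L, |f s * deriv (deriv k) s| := h3
      _ = ∫ s in (0:ℝ)..L, |f s| * |deriv (deriv k) s| := by rw [h4]
      _ ≤ A * B := hcs2
  -- minimum point of f²
  obtain ⟨c, hcmem, hcmin⟩ :=
    (isCompact_Icc (a := (0:ℝ)) (b := L)).exists_isMinOn (Set.nonempty_Icc.mpr hL)
      ((hfc.pow 2).continuousOn)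
  have hfc2 : f c ^ 2 ≤ e := by
    have hmono : (∫ _s in (0:ℝ)..L, f c ^ 2) ≤ ∫ s in (0:ℝ)..L, f s ^ 2 := by
      apply intervalIntegral.integral_mono_on hL
        (intervalIntegrable_const) ((hfc.pow 2).intervalIntegrable 0 L)
      intro x hx
      exact hcmin hx
    rw [intervalIntegral.integral_const, smul_eq_mul, sub_zero] at hmono
    nlinarith [sq_nonneg (f c)]
  -- sup bound for f² via FTC
  set h : ℝ → ℝ := fun t => 2 * f t * deriv k t with hhdef
  have hhc : Continuous h := (continuous_const.mul hfc).mul hk'c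
  have hftc : ∀ s ∈ Set.Icc (0:ℝ) L, (∫ t in c..s, h t) = f s ^ 2 - f c ^ 2 := by
    intro s _
    apply intervalIntegral.integral_eq_sub_of_hasDerivAt
    · intro x _
      have hdx : HasDerivAt f (deriv k x) x := ((hdk x).hasDerivAt).sub_const 1
      have := hdx.fun_pow 2
      simpa [hhdef] using this
    · exact hhc.intervalIntegrable c s
  have habs : ∀ a b : ℝ, a ∈ Set.Icc (0:ℝ) L → b ∈ Set.Icc (0:ℝ) L →
      |∫ t in a..b, h t| ≤ ∫ t in (0:ℝ)..L, |h t| := by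
    have base : ∀ a b : ℝ, a ∈ Set.Icc (0:ℝ) L → b ∈ Set.Icc (0:ℝ) L → a ≤ b →
        |∫ t in a..b, h t| ≤ ∫ t in (0:ℝ)..L, |h t| := by
      intro a b ha hb hab
      calc |∫ t in a..b, h t| ≤ ∫ t in a..b, |h t| :=
            intervalIntegral.abs_integral_le_integral_abs hab
        _ ≤ ∫ t in (0:ℝ)..L, |h t| := by
            apply intervalIntegral.integral_mono_interval ha.1 hab hb.2
            · exact Filter.Eventually.of_forall (fun x => abs_nonneg _)
            · exact hhc.abs.intervalIntegrable 0 L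
    intro a b ha hb
    rcases le_total a b with hab | hba
    · exact base a b ha hb hab
    · rw [intervalIntegral.integral_symm, abs_neg]
      exact base b a hb ha hba
  set K := e + 2 * (∫ t in (0:ℝ)..L, |f t| * |deriv k t|) with hKdef
  have hintabs : (∫ t in (0:ℝ)..L, |h t|)
      = 2 * ∫ t in (0:ℝ)..L, |f t| * |deriv k t| := by
    rw [← intervalIntegral.integral_const_mul]
    apply intervalIntegral.integral_congr
    intro t _
    simp only [hhdef]
    rw [abs_mul, abs_mul]
    simp [abs_of_nonneg, mul_assoc]
  have hsup : ∀ s ∈ Set.Icc (0:ℝ) L, f s ^ 2 ≤ K := by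
    intro s hs
    have h1 : f s ^ 2 - f c ^ 2 ≤ |∫ t in c..s, h t| := by
      rw [hftc s hs]; exact le_abs_self _
    have h2 := habs c s hcmem hs
    rw [hintabs] at h2
    simp only [hKdef]
    linarith
  -- Cauchy–Schwarz for f, f'
  have hcs1 : (∫ t in (0:ℝ)..L, |f t| * |deriv k t|) ≤ A * Real.sqrt P :=
    aux_cs19 hL hfc hk'c
  -- bound K
  have hsqrtP : Real.sqrt P ≤ Real.sqrt A * Real.sqrt B := by
    calc Real.sqrt P ≤ Real.sqrt (A * B) := Real.sqrt_le_sqrt hpart1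
      _ = Real.sqrt A * Real.sqrt B := Real.sqrt_mul hA0 B
  have hK0 : 0 ≤ K := by
    have : 0 ≤ ∫ t in (0:ℝ)..L, |f t| * |deriv k t| :=
      intervalIntegral.integral_nonneg hL (fun t _ => mul_nonneg (abs_nonneg _) (abs_nonneg _))
    simp only [hKdef]; linarith
  have hKle : K ≤ (A + Real.sqrt A * Real.sqrt B) ^ 2 := by
    set sAB := Real.sqrt A * Real.sqrt B with hsABdef
    have h1 : (∫ t in (0:ℝ)..L, |f t| * |deriv k t|) ≤ A * sAB :=
      le_trans hcs1 (mul_le_mul_of_nonneg_left hsqrtP hA0)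
    have hexp : (A + sAB) ^ 2 = A ^ 2 + 2 * (A * sAB) + sAB ^ 2 := by ring
    have hs2 : 0 ≤ sAB ^ 2 := sq_nonneg _
    rw [hKdef, hexp]
    linarith [h1, hs2, hA2.ge, hA2.le]
  have hsqK : Real.sqrt K ≤ A + Real.sqrt A * Real.sqrt B := by
    have hnn : 0 ≤ A + Real.sqrt A * Real.sqrt B := by positivity
    calc Real.sqrt K ≤ Real.sqrt ((A + Real.sqrt A * Real.sqrt B) ^ 2) :=
          Real.sqrt_le_sqrt hKle
      _ = A + Real.sqrt A * Real.sqrt B := Real.sqrt_sq hnn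
  -- bound |∫ f² f''|
  have hmain : |∫ s in (0:ℝ)..L, f s ^ 2 * deriv (deriv k) s|
      ≤ Real.sqrt K * (A * B) := by
    have h3 : |∫ s in (0:ℝ)..L, f s ^ 2 * deriv (deriv k) s|
        ≤ ∫ s in (0:ℝ)..L, |f s ^ 2 * deriv (deriv k) s| :=
      intervalIntegral.abs_integral_le_integral_abs hL
    have h4 : (∫ s in (0:ℝ)..L, |f s ^ 2 * deriv (deriv k) s|)
        ≤ ∫ s in (0:ℝ)..L, Real.sqrt K * (|f s| * |deriv (deriv k) s|) := by
      apply intervalIntegral.integral_mono_on hL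
        (((hfc.pow 2).mul hk''c).abs.intervalIntegrable 0 L)
        ((continuous_const.mul (hfc.abs.mul hk''c.abs)).intervalIntegrable 0 L)
      intro x hx
      have hfx : |f x| ≤ Real.sqrt K := Real.abs_le_sqrt (hsup x hx)
      have habs2 : |f x ^ 2 * deriv (deriv k) x|
          = |f x| * (|f x| * |deriv (deriv k) x|) := by
        rw [abs_mul, sq, abs_mul]; ring
      show |f x ^ 2 * deriv (deriv k) x| ≤ Real.sqrt K * (|f x| * |deriv (deriv k) x|)
      rw [habs2]
      exact mul_le_mul_of_nonneg_right hfx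
        (mul_nonneg (abs_nonneg _) (abs_nonneg _))
    have h5 : (∫ s in (0:ℝ)..L, Real.sqrt K * (|f s| * |deriv (deriv k) s|))
        = Real.sqrt K * ∫ s in (0:ℝ)..L, |f s| * |deriv (deriv k) s| :=
      intervalIntegral.integral_const_mul _ _
    calc |∫ s in (0:ℝ)..L, f s ^ 2 * deriv (deriv k) s|
        ≤ ∫ s in (0:ℝ)..L, |f s ^ 2 * deriv (deriv k) s| := h3
      _ ≤ ∫ s in (0:ℝ)..L, Real.sqrt K * (|f s| * |deriv (deriv k) s|) := h4
      _ = Real.sqrt K * ∫ s in (0:ℝ)..L, |f s| * |deriv (deriv k) s| := h5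
      _ ≤ Real.sqrt K * (A * B) :=
          mul_le_mul_of_nonneg_left hcs2 (Real.sqrt_nonneg _)
  -- final algebra
  have hfinal : Real.sqrt K * (A * B) ≤ 3 * A * (X + e) := by
    set u := Real.sqrt A with hudef
    set v := Real.sqrt B with hvdef
    have hu0 : 0 ≤ u := Real.sqrt_nonneg _
    have hv0 : 0 ≤ v := Real.sqrt_nonneg _
    have hu2 : u ^ 2 = A := Real.sq_sqrt hA0
    have hv2 : v ^ 2 = B := Real.sq_sqrt hB0
    have hbound : Real.sqrt K * (A * B) ≤ (u ^ 2 + u * v) * (u ^ 2 * v ^ 2) := by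
      have hAB0 : 0 ≤ A * B := mul_nonneg hA0 hB0
      have := mul_le_mul_of_nonneg_right hsqK hAB0
      calc Real.sqrt K * (A * B) ≤ (A + u * v) * (A * B) := this
        _ = (u ^ 2 + u * v) * (u ^ 2 * v ^ 2) := by rw [← hu2, ← hv2]
    have halg : (u ^ 2 + u * v) * (u ^ 2 * v ^ 2) ≤ 3 * u ^ 2 * (v ^ 4 + u ^ 4) :=
      aux_alg19 u v
    have hXe : v ^ 4 + u ^ 4 = X + e := by
      have h1 : v ^ 4 = X := by
        rw [show v ^ 4 = (v ^ 2) ^ 2 by ring, hv2, hB2]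
      have h2 : u ^ 4 = e := by
        rw [show u ^ 4 = (u ^ 2) ^ 2 by ring, hu2, hA2]
      rw [h1, h2]
    calc Real.sqrt K * (A * B) ≤ (u ^ 2 + u * v) * (u ^ 2 * v ^ 2) := hbound
      _ ≤ 3 * u ^ 2 * (v ^ 4 + u ^ 4) := halg
      _ = 3 * A * (X + e) := by rw [hu2, hXe]
  constructor
  · -- part 1
    rw [show (∫ s in (0:ℝ)..(2*π*ω), (k s - 1) ^ 2) = e from rfl] at *
    calc (∫ s in (0:ℝ)..L, (deriv k s) ^ 2) = P := rfl
      _ ≤ A * B := hpart1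
      _ = Real.sqrt e * Real.sqrt (∫ s in (0:ℝ)..L, (iteratedDeriv 2 k s) ^ 2) := by
          rw [hAdef, hBdef, hXdef, hi2]
  · -- part 2
    have hrw : (∫ s in (0:ℝ)..L, (k s - 1) ^ 2 * iteratedDeriv 2 k s)
        = ∫ s in (0:ℝ)..L, f s ^ 2 * deriv (deriv k) s := by
      rw [hi2]
    have hrw2 : (∫ s in (0:ℝ)..L, (iteratedDeriv 2 k s) ^ 2) = X := by
      rw [hXdef, hi2]
    rw [hrw, hrw2]
    calc |∫ s in (0:ℝ)..L, f s ^ 2 * deriv (deriv k) s|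
        ≤ Real.sqrt K * (A * B) := hmain
      _ ≤ 3 * A * (X + e) := hfinal
      _ = 3 * Real.sqrt e * (X + e) := by rw [hAdef]
end
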